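/- arXiv:math/0103113 — 3 statements merged into one kernel-verified Lean document; each statement's English description precedes it below -/
import Mathlib

section
/- Let G be a group and H a normal locally nilpotent subgroup, and K a normal locally nilpotent subgroup of G. Then the product HK is a normal locally nilpotent subgroup of G. -/
/-- A subgroup `H` of `G` is locally nilpotent if every finitely generated
subgroup of `H` is nilpotent. -/
def LocallyNilpotent {G : Type*} [Group G] (H : Subgroup G) : Prop :=
  ∀ s : Finset G, (s : Set G) ⊆ (H : Set G) →
    Group.IsNilpotent (Subgroup.closure (s : Set G))

namespace HirschPlotkin

open Subgroup commutatorElement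

variable {G : Type*} [Group G]

/-- `A` normalizes `B` (elementwise conjugation stays in `B`). -/
def Normz (A B : Subgroup G) : Prop :=
  ∀ a ∈ A, ∀ b ∈ B, a * b * a⁻¹ ∈ B

theorem normz_self (A : Subgroup G) : Normz A A := fun a ha b hb =>
  A.mul_mem (A.mul_mem ha hb) (A.inv_mem ha)

theorem normz_of_le {A B C : Subgroup G} (h : Normz A C) (hBA : B ≤ A) : Normz B C :=
  fun a ha => h a (hBA ha)

/-- To show every element of `closure s` normalizes `B`, it suffices on generators,
in both directions. -/
theorem normz_closure (s : Set G) (B : Subgroup G)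
    (h : ∀ g ∈ s, (∀ b ∈ B, g * b * g⁻¹ ∈ B) ∧ (∀ b ∈ B, g⁻¹ * b * g ∈ B)) :
    Normz (closure s) B := by
  have key : ∀ a ∈ closure s, (∀ b ∈ B, a * b * a⁻¹ ∈ B) ∧ (∀ b ∈ B, a⁻¹ * b * a ∈ B) := by
    intro a ha
    induction ha using closure_induction with
    | mem x hx => exact h x hx
    | one => constructor <;> (intro b hb; simpa using hb)
    | mul x y hx hy px py =>
      constructor
      · intro b hb
        have : x * (y * b * y⁻¹) * x⁻¹ ∈ B := px.1 _ (py.1 b hb)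
        convert this using 1; group
      · intro b hb
        have : y⁻¹ * (x⁻¹ * b * x) * y ∈ B := py.2 _ (px.2 b hb)
        convert this using 1; group
    | inv x hx px =>
      constructor
      · intro b hb; have := px.2 b hb; convert this using 1; group
      · intro b hb; have := px.1 b hb; convert this using 1; group
  exact fun a ha => (key a ha).1

/-- Conjugation by a fixed `g` maps `closure t` into `B`, given it does so on generators. -/
theorem conj_closure_mem {t : Set G} {B : Subgroup G} {g : G}
    (h : ∀ x ∈ t, g * x * g⁻¹ ∈ B) : ∀ b ∈ closure t, g * b * g⁻¹ ∈ B := by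
  intro b hb
  induction hb using closure_induction with
  | mem x hx => exact h x hx
  | one => simpa using B.one_mem
  | mul x y hx hy px py =>
    have : (g * x * g⁻¹) * (g * y * g⁻¹) ∈ B := B.mul_mem px py
    convert this using 1; group
  | inv x hx px =>
    have : (g * x * g⁻¹)⁻¹ ∈ B := B.inv_mem px
    convert this using 1; group

theorem normz_sup {A B C : Subgroup G} (hA : Normz A C) (hB : Normz B C) :
    Normz (A ⊔ B) C := by
  rw [← closure_eq A, ← closure_eq B, ← Subgroup.closure_union]
  apply normz_closure
  rintro g (hg | hg)
  · exact ⟨hA g hg, fun b hb => by simpa using hA g⁻¹ (A.inv_mem hg) b hb⟩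
  · exact ⟨hB g hg, fun b hb => by simpa using hB g⁻¹ (B.inv_mem hg) b hb⟩

theorem normz_inf {A B C : Subgroup G} (hB : Normz A B) (hC : Normz A C) :
    Normz A (B ⊓ C) := fun a ha b hb => ⟨hB a ha b hb.1, hC a ha b hb.2⟩

theorem iSup_eq_closure {ι : Sort*} (f : ι → Subgroup G) :
    (⨆ i, f i) = closure (⋃ i, (f i : Set G)) := by
  apply le_antisymm
  · exact iSup_le fun i x hx => subset_closure (Set.mem_iUnion.2 ⟨i, hx⟩)
  · rw [closure_le]
    rintro x hx
    obtain ⟨i, hi⟩ := Set.mem_iUnion.1 hx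
    exact (le_iSup f i) hi

theorem normz_iSup {ι : Sort*} {A : Subgroup G} {f : ι → Subgroup G}
    (h : ∀ i, Normz A (f i)) : Normz A (⨆ i, f i) := by
  intro a ha b hb
  rw [iSup_eq_closure] at hb ⊢
  apply conj_closure_mem (t := ⋃ i, (f i : Set G)) ?_ b hb
  intro x hx
  obtain ⟨i, hi⟩ := Set.mem_iUnion.1 hx
  exact subset_closure (Set.mem_iUnion.2 ⟨i, h i a ha x hi⟩)

theorem commutator_le_right_of_normz {X A : Subgroup G} (h : Normz X A) : ⁅X, A⁆ ≤ A := by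
  rw [commutator_le]
  intro x hx a ha
  have : (x * a * x⁻¹) * a⁻¹ ∈ A := A.mul_mem (h x hx a ha) (A.inv_mem ha)
  convert this using 1; group

theorem commutator_le_left_of_normz {X A : Subgroup G} (h : Normz A X) : ⁅X, A⁆ ≤ X := by
  rw [commutator_le]
  intro x hx a ha
  have : x * (a * x⁻¹ * a⁻¹) ∈ X := X.mul_mem hx (by
    have := h a ha x⁻¹ (X.inv_mem hx); exact this)
  convert this using 1; group

theorem normz_commutator {A X Y : Subgroup G} (hX : Normz A X) (hY : Normz A Y) :
    Normz A ⁅X, Y⁆ := by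
  intro a ha b hb
  rw [Subgroup.commutator_def X Y] at hb ⊢
  apply conj_closure_mem (t := {g | ∃ g₁ ∈ X, ∃ g₂ ∈ Y, ⁅g₁, g₂⁆ = g}) ?_ b hb
  rintro x ⟨g₁, hg₁, g₂, hg₂, rfl⟩
  refine subset_closure ⟨a * g₁ * a⁻¹, hX a ha g₁ hg₁, a * g₂ * a⁻¹, hY a ha g₂ hg₂, ?_⟩
  exact (conjugate_commutatorElement g₁ g₂ a).symm

/-- Key lemma for distributing a commutator over a closure on the left. -/
theorem commutator_closure_left_le {s : Set G} {L M : Subgroup G}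
    (hM : Normz (closure s) M) (h : ∀ x ∈ s, ∀ l ∈ L, ⁅x, l⁆ ∈ M) :
    ⁅closure s, L⁆ ≤ M := by
  rw [commutator_le]
  intro x hx
  induction hx using closure_induction with
  | mem x hx => exact h x hx
  | one => intro l hl; simpa using M.one_mem
  | mul x y hx hy px py =>
    intro l hl
    have : (x * ⁅y, l⁆ * x⁻¹) * ⁅x, l⁆ ∈ M := M.mul_mem (hM x hx _ (py l hl)) (px l hl)
    convert this using 1
    simp only [commutatorElement_def]; group
  | inv x hx px =>
    intro l hl
    have : x⁻¹ * ⁅x, l⁆⁻¹ * (x⁻¹)⁻¹ ∈ M := hM x⁻¹ (inv_mem hx) _ (M.inv_mem (px l hl))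
    convert this using 1
    simp only [commutatorElement_def]; group

/-- Key lemma for distributing a commutator over a closure on the right. -/
theorem commutator_closure_right_le {s : Set G} {X M : Subgroup G}
    (hM : Normz (closure s) M) (h : ∀ x ∈ X, ∀ l ∈ s, ⁅x, l⁆ ∈ M) :
    ⁅X, closure s⁆ ≤ M := by
  rw [commutator_le]
  intro x hx l hl
  induction hl using closure_induction with
  | mem l hl => exact h x hx l hl
  | one => simpa using M.one_mem
  | mul a b ha hb pa pb =>
    have : ⁅x, a⁆ * (a * ⁅x, b⁆ * a⁻¹) ∈ M := M.mul_mem pa (hM a ha _ pb)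
    convert this using 1
    simp only [commutatorElement_def]; group
  | inv a ha pa =>
    have : a⁻¹ * ⁅x, a⁆⁻¹ * (a⁻¹)⁻¹ ∈ M := hM a⁻¹ (inv_mem ha) _ (M.inv_mem pa)
    convert this using 1
    simp only [commutatorElement_def]; group

/-- Ambient lower central series of a subgroup. -/
def acs (A : Subgroup G) : ℕ → Subgroup G
  | 0 => A
  | n + 1 => ⁅acs A n, A⁆

theorem normz_acs {X A : Subgroup G} (h : Normz X A) : ∀ n, Normz X (acs A n)
  | 0 => h
  | n + 1 => normz_commutator (normz_acs h n) h

theorem acs_le_self {A : Subgroup G} : ∀ n, acs A n ≤ A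
  | 0 => le_rfl
  | n + 1 => by
    show ⁅acs A n, A⁆ ≤ A
    exact (commutator_mono (acs_le_self n) le_rfl).trans
      (commutator_le_right_of_normz (normz_self A))

theorem map_lcs_eq_acs (A : Subgroup G) :
    ∀ n, (Subgroup.lowerCentralSeries (⊤ : Subgroup A) n).map A.subtype = acs A n
  | 0 => by
    show Subgroup.map A.subtype ⊤ = A
    rw [← MonoidHom.range_eq_map, A.range_subtype]
  | n + 1 => by
    show Subgroup.map A.subtype ⁅Subgroup.lowerCentralSeries (⊤ : Subgroup A) n, ⊤⁆ = ⁅acs A n, A⁆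
    rw [Subgroup.map_commutator, map_lcs_eq_acs A n, ← MonoidHom.range_eq_map,
      A.range_subtype]

theorem acs_eq_bot_of_nilpotent {A : Subgroup G} (h : Group.IsNilpotent A) :
    ∃ c, ∀ m, c ≤ m → acs A m = ⊥ := by
  haveI := h
  refine ⟨Group.nilpotencyClass A, fun m hm => ?_⟩
  induction m with
  | zero =>
    have h0 : Group.nilpotencyClass A = 0 := Nat.le_zero.mp hm
    rw [← map_lcs_eq_acs, ← h0, Subgroup.lowerCentralSeries_nilpotencyClass]
    exact (map_bot _)
  | succ k ih =>
    rcases Nat.lt_or_ge (Group.nilpotencyClass A) (k + 1) with hk | hk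
    · have : acs A k = ⊥ := ih (Nat.lt_succ_iff.mp hk)
      show ⁅acs A k, A⁆ = ⊥
      rw [this]
      refine le_bot_iff.mp ?_
      rw [commutator_le]
      intro g hg a _
      rw [mem_bot] at hg; subst hg
      simp [mem_bot]
    · have : Group.nilpotencyClass A = k + 1 := le_antisymm hm hk
      rw [← map_lcs_eq_acs, ← this, Subgroup.lowerCentralSeries_nilpotencyClass]
      exact (map_bot _)

theorem nilpotent_of_acs_eq_bot {A : Subgroup G} {n : ℕ} (h : acs A n = ⊥) :
    Group.IsNilpotent A := by
  rw [_root_.nilpotent_iff_lowerCentralSeries]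
  refine ⟨n, ?_⟩
  apply Subgroup.map_injective A.subtype_injective
  rw [map_lcs_eq_acs A n, h, Subgroup.map_bot]

theorem nilpotent_of_le {A B : Subgroup G} (h : A ≤ B) (hB : Group.IsNilpotent B) :
    Group.IsNilpotent A := by
  haveI := hB
  haveI : Group.IsNilpotent (A.subgroupOf B) := Subgroup.isNilpotent _
  exact nilpotent_of_mulEquiv (subgroupOfEquivOfLe h)

/-- **Fitting's theorem**, for mutually normalizing nilpotent subgroups. -/
theorem fitting {A B : Subgroup G} (hA : Group.IsNilpotent A) (hB : Group.IsNilpotent B)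
    (hAB : Normz A B) (hBA : Normz B A) : Group.IsNilpotent ↥(A ⊔ B) := by
  obtain ⟨c, hc⟩ := acs_eq_bot_of_nilpotent hA
  obtain ⟨d, hd⟩ := acs_eq_bot_of_nilpotent hB
  -- weighted series
  set WA : ℕ → Subgroup G := fun i => Nat.rec (A ⊔ B) (fun k _ => acs A k) i with hWA
  set VB : ℕ → Subgroup G := fun j => Nat.rec (A ⊔ B) (fun k _ => acs B k) j with hVB
  have hWA0 : WA 0 = A ⊔ B := rfl
  have hWAs : ∀ k, WA (k + 1) = acs A k := fun k => rfl
  have hVB0 : VB 0 = A ⊔ B := rfl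
  have hVBs : ∀ k, VB (k + 1) = acs B k := fun k => rfl
  have hnzAB : Normz (A ⊔ B) A := normz_sup (normz_self A) hBA
  have hnzBA : Normz (A ⊔ B) B := normz_sup hAB (normz_self B)
  have hnzWA : ∀ i, Normz (A ⊔ B) (WA i) := by
    intro i
    cases i with
    | zero => exact normz_self _
    | succ k => exact normz_acs hnzAB k
  have hnzVB : ∀ j, Normz (A ⊔ B) (VB j) := by
    intro j
    cases j with
    | zero => exact normz_self _
    | succ k => exact normz_acs hnzBA k
  have hcommWA : ∀ i, ⁅WA i, A⁆ ≤ WA (i + 1) := by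
    intro i
    cases i with
    | zero => exact commutator_le_right_of_normz hnzAB
    | succ k => exact le_of_eq rfl
  have hcommVB : ∀ j, ⁅VB j, B⁆ ≤ VB (j + 1) := by
    intro j
    cases j with
    | zero => exact commutator_le_right_of_normz hnzBA
    | succ k => exact le_of_eq rfl
  have hWAB : ∀ i, ⁅WA i, B⁆ ≤ WA i := by
    intro i
    exact commutator_le_left_of_normz (normz_of_le (hnzWA i) le_sup_right)
  have hVBA : ∀ j, ⁅VB j, A⁆ ≤ VB j := by
    intro j
    exact commutator_le_left_of_normz (normz_of_le (hnzVB j) le_sup_left)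
  -- the decreasing sequence
  set S : ℕ → Subgroup G := fun n => ⨆ i : Fin (n + 2), WA i ⊓ VB (n + 1 - i) with hS
  have hnzS : ∀ n, Normz (A ⊔ B) (S n) := by
    intro n
    exact normz_iSup fun i => normz_inf (hnzWA i) (hnzVB _)
  have hWAle : ∀ i, WA i ≤ A ⊔ B := by
    intro i
    cases i with
    | zero => exact le_rfl
    | succ k => exact (acs_le_self k).trans le_sup_left
  have hVBle : ∀ j, VB j ≤ A ⊔ B := by
    intro j
    cases j with
    | zero => exact le_rfl
    | succ k => exact (acs_le_self k).trans le_sup_right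
  have hSle : ∀ n, S n ≤ A ⊔ B := by
    intro n
    exact iSup_le fun i => inf_le_left.trans (hWAle i)
  have main : ∀ n, acs (A ⊔ B) n ≤ S n := by
    intro n
    induction n with
    | zero =>
      show A ⊔ B ≤ S 0
      apply sup_le
      · have : WA 1 ⊓ VB 0 ≤ S 0 := by rw [hS]; exact le_iSup (fun i : Fin 2 => WA i ⊓ VB (1 - i)) ⟨1, by omega⟩
        refine le_trans ?_ this
        exact le_inf le_rfl le_sup_left
      · have : WA 0 ⊓ VB 1 ≤ S 0 := by rw [hS]; exact le_iSup (fun i : Fin 2 => WA i ⊓ VB (1 - i)) ⟨0, by omega⟩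
        refine le_trans ?_ this
        exact le_inf le_sup_right le_rfl
    | succ n ih =>
      show ⁅acs (A ⊔ B) n, A ⊔ B⁆ ≤ S (n + 1)
      have hcompA : ∀ i : Fin (n + 2), ∀ x ∈ WA i ⊓ VB (n + 1 - (i : ℕ)),
          ∀ l ∈ A, ⁅x, l⁆ ∈ S (n + 1) := by
        intro i x hi l hl
        have m1 : ⁅x, l⁆ ∈ WA ((i : ℕ) + 1) :=
          hcommWA i (commutator_mem_commutator hi.1 hl)
        have m2 : ⁅x, l⁆ ∈ VB (n + 1 - (i : ℕ)) :=
          hVBA _ (commutator_mem_commutator hi.2 hl)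
        have hcomp : WA ((i : ℕ) + 1) ⊓ VB (n + 2 - ((i : ℕ) + 1)) ≤ S (n + 1) :=
          le_iSup (fun i' : Fin (n + 3) => WA i' ⊓ VB (n + 2 - (i' : ℕ))) ⟨(i : ℕ) + 1, by omega⟩
        have heq : (n : ℕ) + 2 - ((i : ℕ) + 1) = n + 1 - (i : ℕ) := by omega
        rw [heq] at hcomp
        exact hcomp ⟨m1, m2⟩
      have hcompB : ∀ i : Fin (n + 2), ∀ x ∈ WA i ⊓ VB (n + 1 - (i : ℕ)),
          ∀ l ∈ B, ⁅x, l⁆ ∈ S (n + 1) := by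
        intro i x hi l hl
        have m1 : ⁅x, l⁆ ∈ WA (i : ℕ) :=
          hWAB i (commutator_mem_commutator hi.1 hl)
        have m2 : ⁅x, l⁆ ∈ VB ((n + 1 - (i : ℕ)) + 1) :=
          hcommVB _ (commutator_mem_commutator hi.2 hl)
        have hcomp : WA (i : ℕ) ⊓ VB (n + 2 - (i : ℕ)) ≤ S (n + 1) :=
          le_iSup (fun i' : Fin (n + 3) => WA i' ⊓ VB (n + 2 - (i' : ℕ))) ⟨(i : ℕ), by omega⟩
        have heq : (n : ℕ) + 2 - (i : ℕ) = (n + 1 - (i : ℕ)) + 1 := by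
          have := i.isLt; omega
        rw [heq] at hcomp
        exact hcomp ⟨m1, m2⟩
      have hnzSn1 : Normz (closure ((A : Set G) ∪ (B : Set G))) (S (n + 1)) := by
        rw [Subgroup.closure_union, closure_eq, closure_eq]
        exact hnzS (n + 1)
      have hSn_cl : S n = closure (⋃ i : Fin (n + 2),
          ((WA (i : ℕ) ⊓ VB (n + 1 - (i : ℕ)) : Subgroup G) : Set G)) :=
        iSup_eq_closure _
      have hnzcl : Normz (closure (⋃ i : Fin (n + 2),
          ((WA (i : ℕ) ⊓ VB (n + 1 - (i : ℕ)) : Subgroup G) : Set G))) (S (n + 1)) := by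
        rw [← hSn_cl]
        exact normz_of_le (hnzS (n + 1)) (hSle n)
      have claimA : ⁅S n, A⁆ ≤ S (n + 1) := by
        rw [hSn_cl]
        apply commutator_closure_left_le hnzcl
        intro x hx l hl
        obtain ⟨i, hi⟩ := Set.mem_iUnion.1 hx
        exact hcompA i x hi l hl
      have claimB : ⁅S n, B⁆ ≤ S (n + 1) := by
        rw [hSn_cl]
        apply commutator_closure_left_le hnzcl
        intro x hx l hl
        obtain ⟨i, hi⟩ := Set.mem_iUnion.1 hx
        exact hcompB i x hi l hl
      have hsupcl : A ⊔ B = closure ((A : Set G) ∪ (B : Set G)) := by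
        rw [Subgroup.closure_union, closure_eq, closure_eq]
      have h1 : ⁅S n, A ⊔ B⁆ ≤ S (n + 1) := by
        rw [hsupcl]
        apply commutator_closure_right_le hnzSn1
        rintro x hx l (hl | hl)
        · exact claimA (commutator_mem_commutator hx hl)
        · exact claimB (commutator_mem_commutator hx hl)
      calc ⁅acs (A ⊔ B) n, A ⊔ B⁆ ≤ ⁅S n, A ⊔ B⁆ := commutator_mono ih le_rfl
        _ ≤ S (n + 1) := h1
  -- conclude
  have hbot : acs (A ⊔ B) (c + d) = ⊥ := by
    refine le_bot_iff.mp ((main (c + d)).trans ?_)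
    apply iSup_le
    intro i
    rcases Nat.lt_or_ge (i : ℕ) (c + 1) with hi | hi
    · have hj : d ≤ c + d + 1 - (i : ℕ) - 1 := by omega
      have hne : c + d + 1 - (i : ℕ) = (c + d + 1 - (i : ℕ) - 1) + 1 := by omega
      rw [hne, hVBs]
      exact le_trans (inf_le_right.trans (le_of_eq (hd _ hj))) bot_le
    · have hne : (i : ℕ) = ((i : ℕ) - 1) + 1 := by omega
      rw [hne, hWAs]
      exact le_trans (inf_le_left.trans (le_of_eq (hc _ (by omega)))) bot_le
  exact nilpotent_of_acs_eq_bot hbot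

/-- In a finitely generated nilpotent subgroup `M = closure s`, any finite subset `t`
is contained in a finite set `d` (within a conjugation-stable class `C`) whose closure
is normalized by all of `M`. -/
theorem exists_fg_normal_closure {M : Subgroup G} (hM : Group.IsNilpotent M)
    (s t : Finset G) (hs : closure (s : Set G) = M) (ht : (t : Set G) ⊆ (M : Set G))
    (C : Set G) (htC : (t : Set G) ⊆ C) (hC : ∀ x ∈ C, ∀ m ∈ M, ⁅x, m⁆ ∈ C) :
    ∃ d : Finset G, (t : Set G) ⊆ (d : Set G) ∧ (d : Set G) ⊆ C ∧
      Normz M (closure (d : Set G)) := by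
  classical
  obtain ⟨e, he⟩ := acs_eq_bot_of_nilpotent hM
  set A' : Finset G := s ∪ s.image (·⁻¹) with hA'
  have hsM : (s : Set G) ⊆ (M : Set G) := by
    intro x hx; exact hs ▸ subset_closure hx
  have hA'M : (A' : Set G) ⊆ (M : Set G) := by
    intro x hx
    simp only [hA', Finset.coe_union, Set.mem_union, Finset.coe_image, Set.mem_image,
      Finset.mem_coe] at hx
    rcases hx with hx | ⟨y, hy, rfl⟩
    · exact hsM hx
    · exact M.inv_mem (hsM hy)
  set L : ℕ → Finset G := fun k => Nat.rec (motive := fun _ => Finset G) t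
    (fun _ prev => (prev ×ˢ A').image fun p => ⁅p.1, p.2⁆) k with hLdef
  have hLs : ∀ k, L (k + 1) = ((L k) ×ˢ A').image fun p => ⁅p.1, p.2⁆ := fun k => rfl
  have hLacs : ∀ k, (L k : Set G) ⊆ (acs M k : Set G) := by
    intro k; induction k with
    | zero => exact ht
    | succ k ihk =>
      intro x hx
      rw [hLs k] at hx
      simp only [Finset.coe_image, Set.mem_image, Finset.mem_coe, Finset.mem_product] at hx
      obtain ⟨⟨a, b⟩, ⟨ha, hb⟩, rfl⟩ := hx
      show ⁅a, b⁆ ∈ ⁅acs M k, M⁆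
      exact commutator_mem_commutator (ihk (Finset.mem_coe.2 ha)) (hA'M (Finset.mem_coe.2 hb))
  have hLC : ∀ k, (L k : Set G) ⊆ C := by
    intro k; induction k with
    | zero => exact htC
    | succ k ihk =>
      intro x hx
      rw [hLs k] at hx
      simp only [Finset.coe_image, Set.mem_image, Finset.mem_coe, Finset.mem_product] at hx
      obtain ⟨⟨a, b⟩, ⟨ha, hb⟩, rfl⟩ := hx
      exact hC a (ihk (Finset.mem_coe.2 ha)) b (hA'M (Finset.mem_coe.2 hb))
  set d : Finset G := (Finset.range (e + 1)).biUnion L with hd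
  have hLd : ∀ k, k ≤ e → ∀ x ∈ L k, x ∈ d := by
    intro k hk x hx
    exact Finset.mem_biUnion.2 ⟨k, Finset.mem_range.2 (by omega), hx⟩
  refine ⟨d, ?_, ?_, ?_⟩
  · intro x hx
    exact Finset.mem_coe.2 (hLd 0 (by omega) x (Finset.mem_coe.1 hx))
  · intro x hx
    obtain ⟨k, hk, hxk⟩ := Finset.mem_biUnion.1 (Finset.mem_coe.1 hx)
    exact hLC k (Finset.mem_coe.2 hxk)
  · have key : ∀ g ∈ (A' : Set G), ∀ x ∈ (d : Set G), g * x * g⁻¹ ∈ closure (d : Set G) := by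
      intro g hg x hx
      obtain ⟨k, hk, hxk⟩ := Finset.mem_biUnion.1 (Finset.mem_coe.1 hx)
      have hke : k ≤ e := by have := Finset.mem_range.1 hk; omega
      rcases lt_or_eq_of_le hke with hlt | heq
      · have hcomm : ⁅x, g⁆ ∈ L (k + 1) := by
          rw [hLs k]
          exact Finset.mem_image.2 ⟨(x, g),
            Finset.mem_product.2 ⟨hxk, Finset.mem_coe.1 hg⟩, rfl⟩
        have h1 : ⁅x, g⁆ ∈ closure (d : Set G) :=
          subset_closure (Finset.mem_coe.2 (hLd (k + 1) (by omega) _ hcomm))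
        have h2 : x ∈ closure (d : Set G) := subset_closure hx
        have : ⁅x, g⁆⁻¹ * x ∈ closure (d : Set G) := mul_mem (inv_mem h1) h2
        convert this using 1
        simp only [commutatorElement_def]; group
      · have hxbot : x ∈ (⊥ : Subgroup G) := by
          rw [← he e le_rfl]
          exact hLacs e (by rw [← heq] at *; exact Finset.mem_coe.2 hxk)
        rw [mem_bot] at hxbot
        subst hxbot
        simpa using one_mem _
    rw [← hs]
    apply normz_closure
    intro g hg
    have hgA : g ∈ (A' : Set G) := by
      simp only [hA', Finset.coe_union, Set.mem_union, Finset.mem_coe]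
      exact Or.inl hg
    have hgiA : g⁻¹ ∈ (A' : Set G) := by
      simp only [hA', Finset.coe_union, Set.mem_union, Finset.coe_image, Set.mem_image,
        Finset.mem_coe]
      exact Or.inr ⟨g, hg, rfl⟩
    constructor
    · exact fun b hb => conj_closure_mem (key g hgA) b hb
    · intro b hb
      simpa using conj_closure_mem (key g⁻¹ hgiA) b hb

/-- Given finite `u ⊆ H`, `v ⊆ K`, there is a finite `w ⊆ H` containing `u` whose
closure is normalized by the closure of `v`. -/
theorem exists_fg_invariant (H K : Subgroup G) (hHn : H.Normal) (hKn : K.Normal)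
    (hK : LocallyNilpotent K) (u v : Finset G)
    (hu : (u : Set G) ⊆ (H : Set G)) (hv : (v : Set G) ⊆ (K : Set G)) :
    ∃ w : Finset G, (w : Set G) ⊆ (H : Set G) ∧ (u : Set G) ⊆ (w : Set G) ∧
      Normz (closure (v : Set G)) (closure (w : Set G)) := by
  classical
  set v' : Finset G := v ∪ v.image (·⁻¹) with hv'
  have hv'K : (v' : Set G) ⊆ (K : Set G) := by
    intro x hx
    simp only [hv', Finset.coe_union, Set.mem_union, Finset.coe_image, Set.mem_image,
      Finset.mem_coe] at hx
    rcases hx with hx | ⟨y, hy, rfl⟩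
    · exact hv hx
    · exact K.inv_mem (hv hy)
  set c : Finset G := (u ×ˢ v').image (fun p => ⁅p.1, p.2⁆) with hc
  have hcHK : (c : Set G) ⊆ ((H ⊓ K : Subgroup G) : Set G) := by
    intro x hx
    simp only [hc, Finset.coe_image, Set.mem_image, Finset.mem_coe, Finset.mem_product] at hx
    obtain ⟨⟨a, b⟩, ⟨ha, hb⟩, rfl⟩ := hx
    have haH : a ∈ H := hu (Finset.mem_coe.2 ha)
    have hbK : b ∈ K := hv'K (Finset.mem_coe.2 hb)
    constructor
    · have : a * (b * a⁻¹ * b⁻¹) ∈ H := H.mul_mem haH (hHn.conj_mem a⁻¹ (H.inv_mem haH) b)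
      show ⁅a, b⁆ ∈ H
      convert this using 1
      simp only [commutatorElement_def]; group
    · show ⁅a, b⁆ ∈ K
      rw [commutatorElement_def]
      exact K.mul_mem (hKn.conj_mem b hbK a) (K.inv_mem hbK)
  have hcK : (c : Set G) ⊆ (K : Set G) := fun x hx => (hcHK hx).2
  have hcH : (c : Set G) ⊆ (H : Set G) := fun x hx => (hcHK hx).1
  set sM : Finset G := v' ∪ c with hsM
  have hsMK : (sM : Set G) ⊆ (K : Set G) := by
    intro x hx
    rcases Finset.mem_union.1 (Finset.mem_coe.1 hx) with h | h
    · exact hv'K (Finset.mem_coe.2 h)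
    · exact hcK (Finset.mem_coe.2 h)
  set M : Subgroup G := closure (sM : Set G) with hMdef
  have hMK : M ≤ K := (closure_le K).2 hsMK
  have hMnil : Group.IsNilpotent M := hK sM hsMK
  have hCclosed : ∀ x ∈ ((H ⊓ K : Subgroup G) : Set G), ∀ m ∈ M,
      ⁅x, m⁆ ∈ ((H ⊓ K : Subgroup G) : Set G) := by
    intro x hx m hm
    have hxH : x ∈ H := hx.1
    have hxK : x ∈ K := hx.2
    have hmK : m ∈ K := hMK hm
    constructor
    · have : x * (m * x⁻¹ * m⁻¹) ∈ H := H.mul_mem hxH (hHn.conj_mem x⁻¹ (H.inv_mem hxH) m)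
      show ⁅x, m⁆ ∈ H
      convert this using 1
      simp only [commutatorElement_def]; group
    · show ⁅x, m⁆ ∈ K
      rw [commutatorElement_def]
      exact K.mul_mem (K.mul_mem (K.mul_mem hxK hmK) (K.inv_mem hxK)) (K.inv_mem hmK)
  obtain ⟨d, hcd, hdHK, hnd⟩ := exists_fg_normal_closure hMnil sM c rfl
    (fun x hx => subset_closure (Finset.mem_coe.2
      (Finset.mem_union.2 (Or.inr (Finset.mem_coe.1 hx)))))
    ((H ⊓ K : Subgroup G) : Set G) hcHK hCclosed
  set w : Finset G := u ∪ d with hw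
  have hdw : (d : Set G) ⊆ (w : Set G) := by
    intro x hx
    exact Finset.mem_coe.2 (Finset.mem_union.2 (Or.inr (Finset.mem_coe.1 hx)))
  have hwH : (w : Set G) ⊆ (H : Set G) := by
    intro x hx
    rcases Finset.mem_union.1 (Finset.mem_coe.1 hx) with h | h
    · exact hu (Finset.mem_coe.2 h)
    · exact (hdHK (Finset.mem_coe.2 h)).1
  refine ⟨w, hwH, fun x hx =>
    Finset.mem_coe.2 (Finset.mem_union.2 (Or.inl (Finset.mem_coe.1 hx))), ?_⟩
  have hgen : ∀ g ∈ (v' : Set G), ∀ x ∈ (w : Set G), g * x * g⁻¹ ∈ closure (w : Set G) := by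
    intro g hg x hx
    rcases Finset.mem_union.1 (Finset.mem_coe.1 hx) with hxu | hxd
    · have hcomm : ⁅x, g⁆ ∈ c := by
        rw [hc]
        exact Finset.mem_image.2 ⟨(x, g), Finset.mem_product.2 ⟨hxu, Finset.mem_coe.1 hg⟩, rfl⟩
      have h1 : ⁅x, g⁆ ∈ closure (w : Set G) :=
        subset_closure (hdw (hcd (Finset.mem_coe.2 hcomm)))
      have h2 : x ∈ closure (w : Set G) := subset_closure hx
      have : ⁅x, g⁆⁻¹ * x ∈ closure (w : Set G) := mul_mem (inv_mem h1) h2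
      convert this using 1
      simp only [commutatorElement_def]; group
    · have hgM : g ∈ M := subset_closure (Finset.mem_coe.2
        (Finset.mem_union.2 (Or.inl (Finset.mem_coe.1 hg))))
      have := hnd g hgM x (subset_closure (Finset.mem_coe.2 hxd))
      exact (Subgroup.closure_mono hdw : closure (d : Set G) ≤ closure (w : Set G)) this
  apply normz_closure
  intro g hg
  have hgv' : g ∈ (v' : Set G) := Finset.mem_coe.2
    (Finset.mem_union.2 (Or.inl (Finset.mem_coe.1 hg)))
  have hgiv' : g⁻¹ ∈ (v' : Set G) := by
    simp only [hv', Finset.coe_union, Set.mem_union, Finset.coe_image, Set.mem_image,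
      Finset.mem_coe]
    exact Or.inr ⟨g, Finset.mem_coe.1 hg, rfl⟩
  constructor
  · exact fun b hb => conj_closure_mem (hgen g hgv') b hb
  · intro b hb
    simpa using conj_closure_mem (hgen g⁻¹ hgiv') b hb

end HirschPlotkin

/-- Hirsch–Plotkin: the product (= join) of two normal locally nilpotent
subgroups is a normal locally nilpotent subgroup. -/
theorem stmt_0 {G : Type*} [Group G] (H K : Subgroup G)
    (hHn : H.Normal) (hKn : K.Normal)
    (hH : LocallyNilpotent H) (hK : LocallyNilpotent K) :
    (H ⊔ K : Subgroup G) = Subgroup.closure {x | ∃ h ∈ H, ∃ k ∈ K, x = h * k} ∧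
    (H ⊔ K : Subgroup G).Normal ∧ LocallyNilpotent (H ⊔ K) := by
  open HirschPlotkin Subgroup in
  haveI := hHn
  haveI := hKn
  refine ⟨?_, ?_, ?_⟩
  · apply le_antisymm
    · apply sup_le
      · intro x hx
        exact subset_closure ⟨x, hx, 1, K.one_mem, (mul_one x).symm⟩
      · intro x hx
        exact subset_closure ⟨1, H.one_mem, x, hx, (one_mul x).symm⟩
    · rw [closure_le]
      rintro x ⟨h, hh, k, hk, rfl⟩
      exact mul_mem ((le_sup_left : H ≤ H ⊔ K) hh) ((le_sup_right : K ≤ H ⊔ K) hk)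
  · infer_instance
  · intro f hf
    classical
    have hdec : ∀ x ∈ f, ∃ h k, h ∈ H ∧ k ∈ K ∧ h * k = x := by
      intro x hx
      have hxHK : x ∈ (↑(H ⊔ K) : Set G) := hf hx
      rw [Subgroup.mul_normal H K] at hxHK
      obtain ⟨h, hh, k, hk, hmul⟩ := hxHK
      exact ⟨h, k, hh, hk, hmul⟩
    choose! hfn kfn h1 h2 h3 using hdec
    set u : Finset G := f.image hfn with hu_def
    set v : Finset G := f.image kfn with hv_def
    have hu : (u : Set G) ⊆ (H : Set G) := by
      intro x hx
      simp only [hu_def, Finset.coe_image, Set.mem_image, Finset.mem_coe] at hx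
      obtain ⟨y, hy, rfl⟩ := hx
      exact h1 y hy
    have hv : (v : Set G) ⊆ (K : Set G) := by
      intro x hx
      simp only [hv_def, Finset.coe_image, Set.mem_image, Finset.mem_coe] at hx
      obtain ⟨y, hy, rfl⟩ := hx
      exact h2 y hy
    obtain ⟨w, hwH, huw, hnVW⟩ := exists_fg_invariant H K hHn hKn hK u v hu hv
    obtain ⟨vt, hvtK, hvvt, hnWVt⟩ := exists_fg_invariant K H hKn hHn hH v w hv hwH
    set W : Subgroup G := closure (w : Set G) with hW_def
    set V : Subgroup G := closure (v : Set G) with hV_def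
    set Sconj : Set G := {x | ∃ y ∈ V, ∃ z ∈ W, z * y * z⁻¹ = x} with hSconj_def
    set Vstar : Subgroup G := closure Sconj with hVstar_def
    have hVVt : V ≤ closure (vt : Set G) :=
      (closure_le _).2 fun a ha => subset_closure (hvvt ha)
    have hVVstar : V ≤ Vstar := by
      intro y hy
      exact subset_closure ⟨y, hy, 1, one_mem W, by group⟩
    have hVstarVt : Vstar ≤ closure (vt : Set G) := by
      rw [hVstar_def, closure_le]
      rintro x ⟨y, hy, z, hz, rfl⟩
      exact hnWVt z hz y (hVVt hy)
    have hNilVstar : Group.IsNilpotent Vstar :=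
      nilpotent_of_le hVstarVt (hK vt hvtK)
    have hNilW : Group.IsNilpotent W := hH w hwH
    have hnWVstar : Normz W Vstar := by
      intro g hg x hx
      apply conj_closure_mem (t := Sconj) ?_ x hx
      rintro y ⟨a, ha, z, hz, rfl⟩
      refine subset_closure ⟨a, ha, g * z, mul_mem hg hz, ?_⟩
      group
    have hnVstarW : Normz Vstar W := by
      apply normz_closure
      rintro g ⟨y, hy, z, hz, rfl⟩
      constructor
      · intro b hb
        have hzb : z⁻¹ * b * z ∈ W := mul_mem (mul_mem (inv_mem hz) hb) hz
        have hyzb : y * (z⁻¹ * b * z) * y⁻¹ ∈ W := hnVW y hy _ hzb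
        have : z * (y * (z⁻¹ * b * z) * y⁻¹) * z⁻¹ ∈ W :=
          mul_mem (mul_mem hz hyzb) (inv_mem hz)
        convert this using 1; group
      · intro b hb
        have hzb : z⁻¹ * b * z ∈ W := mul_mem (mul_mem (inv_mem hz) hb) hz
        have hyzb : y⁻¹ * (z⁻¹ * b * z) * (y⁻¹)⁻¹ ∈ W := hnVW y⁻¹ (inv_mem hy) _ hzb
        have : z * (y⁻¹ * (z⁻¹ * b * z) * (y⁻¹)⁻¹) * z⁻¹ ∈ W :=
          mul_mem (mul_mem hz hyzb) (inv_mem hz)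
        convert this using 1; group
    have hfit : Group.IsNilpotent ↥(W ⊔ Vstar) :=
      fitting hNilW hNilVstar hnWVstar hnVstarW
    have hle : closure (f : Set G) ≤ W ⊔ Vstar := by
      rw [closure_le]
      intro x hx
      have hxf : x ∈ f := Finset.mem_coe.1 hx
      have hx1 : hfn x ∈ W := subset_closure (huw (by
        simp only [hu_def, Finset.coe_image, Set.mem_image, Finset.mem_coe]
        exact ⟨x, hxf, rfl⟩))
      have hx2 : kfn x ∈ Vstar := hVVstar (subset_closure (by
        simp only [hv_def, Finset.coe_image, Set.mem_image, Finset.mem_coe]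
        exact ⟨x, hxf, rfl⟩))
      have : hfn x * kfn x ∈ W ⊔ Vstar :=
        mul_mem ((le_sup_left : W ≤ W ⊔ Vstar) hx1) ((le_sup_right : Vstar ≤ W ⊔ Vstar) hx2)
      rwa [h3 x hxf] at this
    exact nilpotent_of_le hle hfit
end

section
/- Let R = ℤ[t, t⁻¹] be the ring of Laurent polynomials over ℤ and let δ̃ : R ⊕ R → ℤ⁴ be the ℤ-linear map sending (f, g) to (f(1), g(1), f'(1) + g'(1), f''(1) + g''(1)), where f' and f'' denote formal first and second derivatives. Then the ℤ-span of {(n²(t+t⁻¹−2)/2 + n(t−t⁻¹)/2, 1−tⁿ) : n ∈ ℤ} ∪ {(1−tⁿ, n²(t+t⁻¹−2)/2 + n(t−t⁻¹)/2) : n ∈ ℤ} equals ker δ̃. -/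
/- We model the Laurent polynomial ring ℤ[t,t⁻¹], as an abelian group, by the
finitely supported functions `ℤ →₀ ℤ` (coefficient functions), with `tⁿ`
corresponding to `Finsupp.single n 1`. -/

/-- Evaluation at `t = 1`: the sum of coefficients. -/
def ev (f : ℤ →₀ ℤ) : ℤ := f.sum fun _ a => a

/-- First formal derivative evaluated at `t = 1`: `Σ n · coeff n`. -/
def d1 (f : ℤ →₀ ℤ) : ℤ := f.sum fun n a => n * a

/-- Second formal derivative evaluated at `t = 1`: `Σ n(n−1) · coeff n`. -/
def d2 (f : ℤ →₀ ℤ) : ℤ := f.sum fun n a => n * (n - 1) * a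

/-- `aGen n = (n²+n)/2 · t + (n²−n)/2 · t⁻¹ − n² = n²(t+t⁻¹−2)/2 + n(t−t⁻¹)/2`. -/
noncomputable def aGen (n : ℤ) : ℤ →₀ ℤ :=
  Finsupp.single 1 ((n ^ 2 + n) / 2) + Finsupp.single (-1) ((n ^ 2 - n) / 2)
    - Finsupp.single 0 (n ^ 2)

/-- `bGen n = 1 − tⁿ`. -/
noncomputable def bGen (n : ℤ) : ℤ →₀ ℤ := Finsupp.single 0 1 - Finsupp.single n 1

/-! ### Auxiliary machinery -/

section Aux

def evH : (ℤ →₀ ℤ) →+ ℤ where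
  toFun := ev
  map_zero' := Finsupp.sum_zero_index
  map_add' f g := by
    show ev (f + g) = ev f + ev g
    exact Finsupp.sum_add_index' (fun _ => rfl) (fun _ _ _ => rfl)

def d1H : (ℤ →₀ ℤ) →+ ℤ where
  toFun := d1
  map_zero' := Finsupp.sum_zero_index
  map_add' f g := by
    show d1 (f + g) = d1 f + d1 g
    exact Finsupp.sum_add_index' (fun n => mul_zero n) (fun n a b => mul_add n a b)

def d2H : (ℤ →₀ ℤ) →+ ℤ where
  toFun := d2
  map_zero' := Finsupp.sum_zero_index
  map_add' f g := by
    show d2 (f + g) = d2 f + d2 g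
    exact Finsupp.sum_add_index' (fun _ => mul_zero _) (fun _ a b => mul_add _ a b)

@[simp] lemma ev_single (n r : ℤ) : ev (Finsupp.single n r) = r :=
  Finsupp.sum_single_index rfl
@[simp] lemma d1_single (n r : ℤ) : d1 (Finsupp.single n r) = n * r :=
  Finsupp.sum_single_index (mul_zero n)
@[simp] lemma d2_single (n r : ℤ) : d2 (Finsupp.single n r) = n * (n - 1) * r :=
  Finsupp.sum_single_index (mul_zero _)

@[simp] lemma ev_add (f g) : ev (f + g) = ev f + ev g := by exact evH.map_add f g
@[simp] lemma ev_sub (f g) : ev (f - g) = ev f - ev g := by exact evH.map_sub f g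
@[simp] lemma ev_neg (f) : ev (-f) = -ev f := by exact evH.map_neg f
@[simp] lemma ev_zero : ev 0 = 0 := by exact evH.map_zero
@[simp] lemma ev_zsmul (c : ℤ) (f) : ev (c • f) = c * ev f := by
  have h := evH.map_zsmul c f
  simp only [smul_eq_mul] at h
  exact h
@[simp] lemma d1_add (f g) : d1 (f + g) = d1 f + d1 g := by exact d1H.map_add f g
@[simp] lemma d1_sub (f g) : d1 (f - g) = d1 f - d1 g := by exact d1H.map_sub f g
@[simp] lemma d1_neg (f) : d1 (-f) = -d1 f := by exact d1H.map_neg f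
@[simp] lemma d1_zero : d1 0 = 0 := by exact d1H.map_zero
@[simp] lemma d1_zsmul (c : ℤ) (f) : d1 (c • f) = c * d1 f := by
  have h := d1H.map_zsmul c f
  simp only [smul_eq_mul] at h
  exact h
@[simp] lemma d2_add (f g) : d2 (f + g) = d2 f + d2 g := by exact d2H.map_add f g
@[simp] lemma d2_sub (f g) : d2 (f - g) = d2 f - d2 g := by exact d2H.map_sub f g
@[simp] lemma d2_neg (f) : d2 (-f) = -d2 f := by exact d2H.map_neg f
@[simp] lemma d2_zero : d2 0 = 0 := by exact d2H.map_zero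
@[simp] lemma d2_zsmul (c : ℤ) (f) : d2 (c • f) = c * d2 f := by
  have h := d2H.map_zsmul c f
  simp only [smul_eq_mul] at h
  exact h

lemma hu (n : ℤ) : (n ^ 2 + n) / 2 * 2 = n ^ 2 + n := by
  refine Int.ediv_mul_cancel ?_
  have h : Even (n * (n + 1)) := Int.even_mul_succ_self n
  rw [show n ^ 2 + n = n * (n + 1) by ring]
  exact h.two_dvd

lemma hv (n : ℤ) : (n ^ 2 - n) / 2 * 2 = n ^ 2 - n := by
  refine Int.ediv_mul_cancel ?_
  have h : Even ((n - 1) * ((n - 1) + 1)) := Int.even_mul_succ_self (n - 1)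
  rw [show n ^ 2 - n = (n - 1) * ((n - 1) + 1) by ring]
  exact h.two_dvd

@[simp] lemma ev_aGen (n : ℤ) : ev (aGen n) = 0 := by
  simp only [aGen, ev_add, ev_sub, ev_single]
  linarith [hu n, hv n]
@[simp] lemma d1_aGen (n : ℤ) : d1 (aGen n) = n := by
  simp only [aGen, d1_add, d1_sub, d1_single]
  linarith [hu n, hv n]
@[simp] lemma d2_aGen (n : ℤ) : d2 (aGen n) = n ^ 2 - n := by
  simp only [aGen, d2_add, d2_sub, d2_single]
  linarith [hv n]
@[simp] lemma ev_bGen (n : ℤ) : ev (bGen n) = 0 := by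
  simp only [bGen, ev_sub, ev_single]; ring
@[simp] lemma d1_bGen (n : ℤ) : d1 (bGen n) = -n := by
  simp only [bGen, d1_sub, d1_single]; ring
@[simp] lemma d2_bGen (n : ℤ) : d2 (bGen n) = n - n ^ 2 := by
  simp only [bGen, d2_sub, d2_single]; ring

/-- `wGen k = tᵏ(t−1)³`. -/
noncomputable def wGen (k : ℤ) : ℤ →₀ ℤ :=
  Finsupp.single (k + 3) 1 - Finsupp.single (k + 2) 3 + Finsupp.single (k + 1) 3
    - Finsupp.single k 1

@[simp] lemma ev_wGen (k : ℤ) : ev (wGen k) = 0 := by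
  simp only [wGen, ev_add, ev_sub, ev_single]; ring
@[simp] lemma d1_wGen (k : ℤ) : d1 (wGen k) = 0 := by
  simp only [wGen, d1_add, d1_sub, d1_single]; ring
@[simp] lemma d2_wGen (k : ℤ) : d2 (wGen k) = 0 := by
  simp only [wGen, d2_add, d2_sub, d2_single]; ring

lemma idA (k : ℤ) :
    aGen k - (3 : ℤ) • aGen (k + 1) + (3 : ℤ) • aGen (k + 2) - aGen (k + 3) = 0 := by
  ext m
  simp only [aGen, Finsupp.coe_add, Finsupp.coe_sub, Finsupp.coe_smul, Pi.add_apply,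
    Pi.sub_apply, Pi.smul_apply, Finsupp.single_apply, smul_eq_mul, Finsupp.coe_zero,
    Pi.zero_apply]
  split_ifs <;>
    first
      | omega
      | linarith [hu k, hu (k+1), hu (k+2), hu (k+3), hv k, hv (k+1), hv (k+2), hv (k+3)]

lemma idB (k : ℤ) :
    bGen k - (3 : ℤ) • bGen (k + 1) + (3 : ℤ) • bGen (k + 2) - bGen (k + 3) = wGen k := by
  ext m
  simp only [bGen, wGen, Finsupp.coe_add, Finsupp.coe_sub, Finsupp.coe_smul, Pi.add_apply,
    Pi.sub_apply, Pi.smul_apply, Finsupp.single_apply, smul_eq_mul]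
  split_ifs <;> omega

lemma high (k : ℤ) : Finsupp.single (k + 3) (1 : ℤ) =
    wGen k + (3 : ℤ) • Finsupp.single (k + 2) (1 : ℤ)
      - (3 : ℤ) • Finsupp.single (k + 1) (1 : ℤ) + Finsupp.single k (1 : ℤ) := by
  simp only [wGen, Finsupp.smul_single, smul_eq_mul, mul_one]
  abel

lemma low (k : ℤ) : Finsupp.single k (1 : ℤ) =
    -wGen k + Finsupp.single (k + 3) (1 : ℤ) - (3 : ℤ) • Finsupp.single (k + 2) (1 : ℤ)
      + (3 : ℤ) • Finsupp.single (k + 1) (1 : ℤ) := by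
  simp only [wGen, Finsupp.smul_single, smul_eq_mul, mul_one]
  abel

lemma singles_mem (S : AddSubgroup (ℤ →₀ ℤ)) (hw : ∀ k, wGen k ∈ S)
    (h0 : Finsupp.single 0 (1 : ℤ) ∈ S) (h1 : Finsupp.single 1 (1 : ℤ) ∈ S)
    (h2 : Finsupp.single 2 (1 : ℤ) ∈ S) (n : ℤ) : Finsupp.single n (1 : ℤ) ∈ S := by
  have key : ∀ n : ℤ, Finsupp.single n (1 : ℤ) ∈ S ∧ Finsupp.single (n + 1) (1 : ℤ) ∈ S ∧
      Finsupp.single (n + 2) (1 : ℤ) ∈ S := by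
    intro n
    induction n using Int.induction_on with
    | zero =>
      exact ⟨h0, by rw [show (0 : ℤ) + 1 = 1 by norm_num]; exact h1,
        by rw [show (0 : ℤ) + 2 = 2 by norm_num]; exact h2⟩
    | succ i ih =>
      obtain ⟨hi, hi1, hi2⟩ := ih
      refine ⟨hi1, by rwa [show (i : ℤ) + 1 + 1 = i + 2 by ring], ?_⟩
      rw [show (i : ℤ) + 1 + 2 = i + 3 by ring, high]
      exact add_mem (sub_mem (add_mem (hw i) (S.zsmul_mem hi2 3)) (S.zsmul_mem hi1 3)) hi
    | pred i ih =>
      obtain ⟨hi, hi1, hi2⟩ := ih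
      refine ⟨?_, by rwa [show (-i : ℤ) - 1 + 1 = -i by ring],
        by rwa [show (-i : ℤ) - 1 + 2 = -i + 1 by ring]⟩
      rw [low]
      have e3 : (-i : ℤ) - 1 + 3 = -i + 2 := by ring
      have e2 : (-i : ℤ) - 1 + 2 = -i + 1 := by ring
      have e1 : (-i : ℤ) - 1 + 1 = -i := by ring
      rw [e3, e2, e1]
      exact add_mem (sub_mem (add_mem (neg_mem (hw _)) hi2) (S.zsmul_mem hi1 3))
        (S.zsmul_mem hi 3)
  exact (key n).1

lemma all_mem (S : AddSubgroup (ℤ →₀ ℤ)) (hw : ∀ k, wGen k ∈ S)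
    (h0 : Finsupp.single 0 (1 : ℤ) ∈ S) (h1 : Finsupp.single 1 (1 : ℤ) ∈ S)
    (h2 : Finsupp.single 2 (1 : ℤ) ∈ S) (f : ℤ →₀ ℤ) : f ∈ S := by
  induction f using Finsupp.induction with
  | zero => exact zero_mem S
  | single_add a b f _ _ ih =>
    refine add_mem ?_ ih
    have hb : Finsupp.single a b = b • Finsupp.single a (1 : ℤ) := by
      rw [Finsupp.smul_single, smul_eq_mul, mul_one]
    rw [hb]
    exact S.zsmul_mem (singles_mem S hw h0 h1 h2 a) b

/-- The closure of the `wGen k`. -/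
noncomputable def W' : AddSubgroup (ℤ →₀ ℤ) := AddSubgroup.closure (Set.range wGen)

noncomputable def Vs : AddSubgroup (ℤ →₀ ℤ) where
  carrier := {f | ∀ n : ℤ, n ≠ 0 → n ≠ 1 → n ≠ 2 → f n = 0}
  zero_mem' := fun _ _ _ _ => rfl
  add_mem' := by
    intro f g hf hg n h0 h1 h2
    simp only [Finsupp.coe_add, Pi.add_apply, hf n h0 h1 h2, hg n h0 h1 h2, add_zero]
  neg_mem' := by
    intro f hf n h0 h1 h2
    simp only [Finsupp.coe_neg, Pi.neg_apply, hf n h0 h1 h2, neg_zero]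

@[simp] lemma evH_apply (f : ℤ →₀ ℤ) : evH f = ev f := rfl
@[simp] lemma d1H_apply (f : ℤ →₀ ℤ) : d1H f = d1 f := rfl
@[simp] lemma d2H_apply (f : ℤ →₀ ℤ) : d2H f = d2 f := rfl

lemma W'_le_ker : ∀ f ∈ W', ev f = 0 ∧ d1 f = 0 ∧ d2 f = 0 := by
  have h : W' ≤ (evH.ker ⊓ d1H.ker ⊓ d2H.ker) := by
    rw [W', AddSubgroup.closure_le]
    rintro _ ⟨k, rfl⟩
    rw [SetLike.mem_coe, AddSubgroup.mem_inf, AddSubgroup.mem_inf, AddMonoidHom.mem_ker,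
      AddMonoidHom.mem_ker, AddMonoidHom.mem_ker, evH_apply, d1H_apply, d2H_apply]
    exact ⟨⟨ev_wGen k, d1_wGen k⟩, d2_wGen k⟩
  intro f hf
  have h1 := h hf
  rw [AddSubgroup.mem_inf, AddSubgroup.mem_inf] at h1
  obtain ⟨⟨ha, hb⟩, hc⟩ := h1
  rw [AddMonoidHom.mem_ker] at ha hb hc
  exact ⟨ha, hb, hc⟩

lemma kernel1 (f : ℤ →₀ ℤ) (h0 : ev f = 0) (h1 : d1 f = 0) (h2 : d2 f = 0) : f ∈ W' := by
  classical
  set Vset : Set (ℤ →₀ ℤ) :=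
    {Finsupp.single 0 1, Finsupp.single 1 1, Finsupp.single 2 1} with hVset
  have hall : f ∈ W' ⊔ AddSubgroup.closure Vset := by
    refine all_mem _ (fun k => AddSubgroup.mem_sup_left
      (show wGen k ∈ W' from AddSubgroup.subset_closure ⟨k, rfl⟩))
      ?_ ?_ ?_ f <;>
    · refine AddSubgroup.mem_sup_right (AddSubgroup.subset_closure ?_)
      simp [hVset]
  rw [AddSubgroup.mem_sup] at hall
  obtain ⟨u, hu, v, hv, huv⟩ := hall
  obtain ⟨hu0, hu1, hu2⟩ := W'_le_ker u hu
  have hveq : v = f - u := by rw [← huv]; abel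
  have hv0 : ev v = 0 := by rw [hveq, ev_sub, h0, hu0, sub_zero]
  have hv1 : d1 v = 0 := by rw [hveq, d1_sub, h1, hu1, sub_zero]
  have hv2 : d2 v = 0 := by rw [hveq, d2_sub, h2, hu2, sub_zero]
  have hsup : ∀ n : ℤ, n ≠ 0 → n ≠ 1 → n ≠ 2 → v n = 0 := by
    have hle : AddSubgroup.closure Vset ≤ Vs := by
      rw [AddSubgroup.closure_le]
      rintro g (rfl | rfl | rfl) <;>
        · intro n hn0 hn1 hn2
          refine Finsupp.single_eq_of_ne ?_
          omega
    exact hle hv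
  have hsubset : v.support ⊆ ({0, 1, 2} : Finset ℤ) := by
    intro n hn
    rw [Finsupp.mem_support_iff] at hn
    by_contra hmem
    simp only [Finset.mem_insert, Finset.mem_singleton] at hmem
    push_neg at hmem
    exact hn (hsup n hmem.1 hmem.2.1 hmem.2.2)
  have hins : ({0, 1, 2} : Finset ℤ) = insert 0 (insert 1 ({2} : Finset ℤ)) := rfl
  have e0 : ev v = v 0 + v 1 + v 2 := by
    rw [ev, Finsupp.sum_of_support_subset v hsubset _ (fun _ _ => rfl), hins,
      Finset.sum_insert (by decide), Finset.sum_insert (by decide), Finset.sum_singleton]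
    ring
  have e1 : d1 v = v 1 + 2 * v 2 := by
    rw [d1, Finsupp.sum_of_support_subset v hsubset _ (fun _ _ => mul_zero _), hins,
      Finset.sum_insert (by decide), Finset.sum_insert (by decide), Finset.sum_singleton]
    ring
  have e2 : d2 v = 2 * v 2 := by
    rw [d2, Finsupp.sum_of_support_subset v hsubset _ (fun _ _ => mul_zero _), hins,
      Finset.sum_insert (by decide), Finset.sum_insert (by decide), Finset.sum_singleton]
    ring
  have hz : v 0 = 0 ∧ v 1 = 0 ∧ v 2 = 0 := by
    rw [hv0] at e0; rw [hv1] at e1; rw [hv2] at e2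
    omega
  have hvzero : v = 0 := by
    ext n
    by_cases hn0 : n = 0
    · rw [hn0]; exact hz.1
    by_cases hn1 : n = 1
    · rw [hn1]; exact hz.2.1
    by_cases hn2 : n = 2
    · rw [hn2]; exact hz.2.2
    exact hsup n hn0 hn1 hn2
  rw [← huv, hvzero, add_zero]
  exact hu

end Aux

/-- The kernel of `δ̃(f,g) = (f(1), g(1), f'(1)+g'(1), f''(1)+g''(1))` is the
ℤ-span of the pairs `(aGen n, bGen n)` and their coordinate swaps. -/
theorem stmt_11 (p : (ℤ →₀ ℤ) × (ℤ →₀ ℤ)) :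
    p ∈ AddSubgroup.closure
        {q : (ℤ →₀ ℤ) × (ℤ →₀ ℤ) |
          ∃ n : ℤ, q = (aGen n, bGen n) ∨ q = (bGen n, aGen n)} ↔
      ev p.1 = 0 ∧ ev p.2 = 0 ∧ d1 p.1 + d1 p.2 = 0 ∧ d2 p.1 + d2 p.2 = 0 := by
  classical
  set genSet : Set ((ℤ →₀ ℤ) × (ℤ →₀ ℤ)) :=
    {q | ∃ n : ℤ, q = (aGen n, bGen n) ∨ q = (bGen n, aGen n)} with hgenSet
  set T : AddSubgroup ((ℤ →₀ ℤ) × (ℤ →₀ ℤ)) := AddSubgroup.closure genSet with hT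
  -- the kernel as a subgroup
  let KG : AddSubgroup ((ℤ →₀ ℤ) × (ℤ →₀ ℤ)) :=
    { carrier := {q | ev q.1 = 0 ∧ ev q.2 = 0 ∧ d1 q.1 + d1 q.2 = 0 ∧ d2 q.1 + d2 q.2 = 0}
      zero_mem' := by
        refine ⟨?_, ?_, ?_, ?_⟩ <;> simp
      add_mem' := by
        rintro a b ⟨ha1, ha2, ha3, ha4⟩ ⟨hb1, hb2, hb3, hb4⟩
        refine ⟨?_, ?_, ?_, ?_⟩ <;>
          simp only [Prod.fst_add, Prod.snd_add, ev_add, d1_add, d2_add] <;> omega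
      neg_mem' := by
        rintro a ⟨ha1, ha2, ha3, ha4⟩
        refine ⟨?_, ?_, ?_, ?_⟩ <;>
          simp only [Prod.fst_neg, Prod.snd_neg, ev_neg, d1_neg, d2_neg] <;> omega }
  -- membership of the swapped/unswapped generators
  have hgen1 : ∀ n : ℤ, (aGen n, bGen n) ∈ T :=
    fun n => AddSubgroup.subset_closure ⟨n, Or.inl rfl⟩
  have hgen2 : ∀ n : ℤ, (bGen n, aGen n) ∈ T :=
    fun n => AddSubgroup.subset_closure ⟨n, Or.inr rfl⟩
  -- (0, wGen k) and (wGen k, 0) are in T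
  have memTb : ∀ k : ℤ, ((0 : ℤ →₀ ℤ), wGen k) ∈ T := by
    intro k
    have hrep : (aGen k, bGen k) - (3 : ℤ) • (aGen (k + 1), bGen (k + 1))
        + (3 : ℤ) • (aGen (k + 2), bGen (k + 2)) - (aGen (k + 3), bGen (k + 3))
        = ((0 : ℤ →₀ ℤ), wGen k) := by
      simp only [Prod.smul_mk, Prod.mk_add_mk, Prod.mk_sub_mk, Prod.mk.injEq]
      exact ⟨idA k, idB k⟩
    rw [← hrep]
    exact sub_mem (add_mem (sub_mem (hgen1 k) (T.zsmul_mem (hgen1 (k + 1)) 3))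
      (T.zsmul_mem (hgen1 (k + 2)) 3)) (hgen1 (k + 3))
  have memTa : ∀ k : ℤ, (wGen k, (0 : ℤ →₀ ℤ)) ∈ T := by
    intro k
    have hrep : (bGen k, aGen k) - (3 : ℤ) • (bGen (k + 1), aGen (k + 1))
        + (3 : ℤ) • (bGen (k + 2), aGen (k + 2)) - (bGen (k + 3), aGen (k + 3))
        = (wGen k, (0 : ℤ →₀ ℤ)) := by
      simp only [Prod.smul_mk, Prod.mk_add_mk, Prod.mk_sub_mk, Prod.mk.injEq]
      exact ⟨idB k, idA k⟩
    rw [← hrep]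
    exact sub_mem (add_mem (sub_mem (hgen2 k) (T.zsmul_mem (hgen2 (k + 1)) 3))
      (T.zsmul_mem (hgen2 (k + 2)) 3)) (hgen2 (k + 3))
  have inlT : ∀ u ∈ W', (u, (0 : ℤ →₀ ℤ)) ∈ T := by
    intro u hu
    have hle : W' ≤ T.comap (AddMonoidHom.inl (ℤ →₀ ℤ) (ℤ →₀ ℤ)) := by
      rw [W', AddSubgroup.closure_le]
      rintro _ ⟨k, rfl⟩
      exact memTa k
    exact hle hu
  have inrT : ∀ u ∈ W', ((0 : ℤ →₀ ℤ), u) ∈ T := by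
    intro u hu
    have hle : W' ≤ T.comap (AddMonoidHom.inr (ℤ →₀ ℤ) (ℤ →₀ ℤ)) := by
      rw [W', AddSubgroup.closure_le]
      rintro _ ⟨k, rfl⟩
      exact memTb k
    exact hle hu
  constructor
  · -- forward direction
    intro hp
    have hle : T ≤ KG := by
      rw [hT, AddSubgroup.closure_le]
      rintro q ⟨n, rfl | rfl⟩ <;>
        refine ⟨?_, ?_, ?_, ?_⟩ <;> simp
    exact hle hp
  · -- backward direction
    obtain ⟨f, g⟩ := p
    rintro ⟨h1, h2, h3, h4⟩
    simp only at h1 h2 h3 h4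
    set a : ℤ := d1 f with ha
    have hdvd : (2 : ℤ) ∣ d2 f := by
      rw [d2, Finsupp.sum]
      refine Finset.dvd_sum fun i _ => ?_
      refine Dvd.dvd.mul_right ?_ (f i)
      have h : Even ((i - 1) * ((i - 1) + 1)) := Int.even_mul_succ_self (i - 1)
      rw [show i * (i - 1) = (i - 1) * ((i - 1) + 1) by ring]
      exact h.two_dvd
    obtain ⟨m, hm⟩ := hdvd
    set q1 : ℤ →₀ ℤ := f - a • aGen 1 - m • (aGen 1 + aGen (-1)) with hq1def
    set q2 : ℤ →₀ ℤ := g - a • bGen 1 - m • (bGen 1 + bGen (-1)) with hq2def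
    have hq1 : q1 ∈ W' := by
      refine kernel1 q1 ?_ ?_ ?_
      · rw [hq1def]
        simp only [ev_sub, ev_add, ev_zsmul, ev_aGen, h1]
        ring
      · rw [hq1def]
        simp only [d1_sub, d1_add, d1_zsmul, d1_aGen]
        ring
      · rw [hq1def]
        simp only [d2_sub, d2_add, d2_zsmul, d2_aGen]
        norm_num
        linarith [hm]
    have hq2 : q2 ∈ W' := by
      refine kernel1 q2 ?_ ?_ ?_
      · rw [hq2def]
        simp only [ev_sub, ev_add, ev_zsmul, ev_bGen, h2]
        ring
      · rw [hq2def]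
        simp only [d1_sub, d1_add, d1_zsmul, d1_bGen]
        linarith [h3]
      · rw [hq2def]
        simp only [d2_sub, d2_add, d2_zsmul, d2_bGen]
        norm_num
        linarith [h4, hm]
    have hrep : (q1, (0 : ℤ →₀ ℤ)) + ((0 : ℤ →₀ ℤ), q2) + a • (aGen 1, bGen 1)
        + m • ((aGen 1, bGen 1) + (aGen (-1), bGen (-1))) = (f, g) := by
      simp only [Prod.smul_mk, Prod.mk_add_mk, Prod.mk.injEq, hq1def, hq2def]
      constructor <;> abel
    rw [← hrep]
    exact add_mem (add_mem (add_mem (inlT q1 hq1) (inrT q2 hq2))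
      (T.zsmul_mem (hgen1 1) a)) (T.zsmul_mem (add_mem (hgen1 1) (hgen1 (-1))) m)
end

section
/- Let M be a finitely generated module over the Noetherian ring ℤ[t, t⁻¹] such that multiplication by (t−1) is an automorphism of M. Then M is a torsion module: every m ∈ M is annihilated by some nonzero Laurent polynomial. -/
open LaurentPolynomial

/-- Augmentation: the algebra hom `ℤ[T,T⁻¹] → ℤ` sending all `T n` to `1`. -/
noncomputable def aug : LaurentPolynomial ℤ →ₐ[ℤ] ℤ :=
  AddMonoidAlgebra.lift ℤ ℤ ℤ 1

lemma aug_T (n : ℤ) : aug (T n) = 1 := by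
  rw [aug, T, AddMonoidAlgebra.lift_single]
  simp

/-- If `M` is a finitely generated module over `ℤ[t,t⁻¹]` on which
multiplication by `t − 1` is bijective, then `M` is a torsion module. -/
theorem stmt_14 (M : Type*) [AddCommGroup M]
    [Module (LaurentPolynomial ℤ) M] [Module.Finite (LaurentPolynomial ℤ) M]
    (hb : Function.Bijective fun x : M => ((T 1 : LaurentPolynomial ℤ) - 1) • x) :
    ∀ m : M, ∃ p : LaurentPolynomial ℤ, p ≠ 0 ∧ p • m = 0 := by
  set I : Ideal (LaurentPolynomial ℤ) := Ideal.span {(T 1 : LaurentPolynomial ℤ) - 1} with hI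
  have hin : (⊤ : Submodule (LaurentPolynomial ℤ) M) ≤ I • ⊤ := by
    intro m _
    obtain ⟨x, hx⟩ := hb.2 m
    simp only at hx
    rw [← hx]
    exact Submodule.smul_mem_smul (Ideal.subset_span rfl) trivial
  obtain ⟨r, hr1, hr0⟩ :=
    Submodule.exists_sub_one_mem_and_smul_eq_zero_of_fg_of_le_smul I ⊤
      (Module.Finite.fg_top) hin
  intro m
  refine ⟨r, ?_, hr0 m trivial⟩
  intro h
  rw [h, zero_sub, hI, Ideal.mem_span_singleton] at hr1
  obtain ⟨q, hq⟩ := hr1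
  have := congrArg aug hq
  simp [aug_T] at this
end
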